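/- arXiv:1405.7805 — 7 statements merged into one kernel-verified Lean document; each statement's English description precedes it below -/
import Mathlib

section
/- Let C be an additive category and X a non-negatively graded cochain complex in C such that for all k ≥ 0 the differential d^{k+1} is a weak cokernel of d^k. If f, g : X → Y are morphisms of non-negatively graded complexes with f^0 = g^0, then there exists a homotopy h from f to g such that h^1 = 0. -/
open CategoryTheory CategoryTheory.Limits

universe v u

namespace NHomAlg

variable {C : Type u} [Category.{v} C]

/-- `g` is a weak cokernel of `f`. -/
def IsWeakCokernel [HasZeroMorphisms C] {A B Z : C} (f : A ⟶ B) (g : B ⟶ Z) : Prop :=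
  f ≫ g = 0 ∧ ∀ ⦃W : C⦄ (h : B ⟶ W), f ≫ h = 0 → ∃ p : Z ⟶ W, g ≫ p = h

/-- `g` is a weak kernel of `f`. -/
def IsWeakKernel [HasZeroMorphisms C] {A B Z : C} (g : Z ⟶ A) (f : A ⟶ B) : Prop :=
  g ≫ f = 0 ∧ ∀ ⦃W : C⦄ (h : W ⟶ A), h ≫ f = 0 → ∃ p : W ⟶ Z, p ≫ g = h

variable [Preadditive C]

/-- The complex `K` is concentrated in degrees `≤ m`. -/
def ConcentratedBelow (m : ℕ) (K : CochainComplex C ℕ) : Prop :=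
  ∀ k, m < k → IsZero (K.X k)

/-- `(d^1, …, d^n)` is an `n`-cokernel of `d^0`, i.e. for every object `Z` the induced
sequence `0 → Hom(K.X (n+1), Z) → ⋯ → Hom(K.X 1, Z) → Hom(K.X 0, Z)` is exact. -/
def IsNCokernelSeq (n : ℕ) (K : CochainComplex C ℕ) : Prop :=
  (∀ k, 1 ≤ k → k ≤ n → ∀ ⦃Z : C⦄ (h : K.X k ⟶ Z), K.d (k-1) k ≫ h = 0 →
      ∃ p : K.X (k+1) ⟶ Z, K.d k (k+1) ≫ p = h) ∧
  (∀ ⦃Z : C⦄ (h h' : K.X (n+1) ⟶ Z), K.d n (n+1) ≫ h = K.d n (n+1) ≫ h' → h = h')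

/-- `(d^0, …, d^{n-1})` is an `n`-kernel of `d^n`. -/
def IsNKernelSeq (n : ℕ) (K : CochainComplex C ℕ) : Prop :=
  (∀ k, 1 ≤ k → k ≤ n → ∀ ⦃Z : C⦄ (h : Z ⟶ K.X k), h ≫ K.d k (k+1) = 0 →
      ∃ p : Z ⟶ K.X (k-1), p ≫ K.d (k-1) k = h) ∧
  (∀ ⦃Z : C⦄ (h h' : Z ⟶ K.X 0), h ≫ K.d 0 1 = h' ≫ K.d 0 1 → h = h')

/-- An `n`-exact sequence. -/
def IsNExactSeq (n : ℕ) (K : CochainComplex C ℕ) : Prop :=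
  IsNKernelSeq n K ∧ IsNCokernelSeq n K

/-- The morphism `f` admits an `n`-cokernel. -/
def HasNCokernel (n : ℕ) {A B : C} (f : A ⟶ B) : Prop :=
  ∃ (K : CochainComplex C ℕ) (eA : A ≅ K.X 0) (eB : B ≅ K.X 1),
    eA.hom ≫ K.d 0 1 = f ≫ eB.hom ∧ IsNCokernelSeq n K

/-- The morphism `f` admits an `n`-kernel. -/
def HasNKernel (n : ℕ) {A B : C} (f : A ⟶ B) : Prop :=
  ∃ (K : CochainComplex C ℕ) (eA : A ≅ K.X n) (eB : B ≅ K.X (n+1)),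
    eA.hom ≫ K.d n (n+1) = f ≫ eB.hom ∧ IsNKernelSeq n K

/-- `n`-abelian category (axioms (A0), (A1), (A2), (A2ᵒᵖ)). -/
def IsNAbelian (n : ℕ) (C : Type u) [Category.{v} C] [Preadditive C] : Prop :=
  IsIdempotentComplete C ∧
  (∀ ⦃A B : C⦄ (f : A ⟶ B), HasNCokernel n f ∧ HasNKernel n f) ∧
  (∀ K : CochainComplex C ℕ, Mono (K.d 0 1) → IsNCokernelSeq n K → IsNExactSeq n K) ∧
  (∀ K : CochainComplex C ℕ, Epi (K.d n (n+1)) → IsNKernelSeq n K → IsNExactSeq n K)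

/-- Semisimple additive category: every morphism factors as a split epi followed by a
split mono. -/
def Semisimple (C : Type u) [Category.{v} C] : Prop :=
  ∀ ⦃A B : C⦄ (f : A ⟶ B), ∃ (I : C) (p : A ⟶ I) (i : I ⟶ B),
    IsSplitEpi p ∧ IsSplitMono i ∧ p ≫ i = f

/-- `g : X → Y` (a family of morphisms in degrees `0, …, n`) is an `n`-pushout diagram:
in the mapping cone `X^0 → X^1 ⊕ Y^0 → ⋯ → X^n ⊕ Y^{n-1} → Y^n` the sequence
`(d_C^0, …, d_C^{n-1})` is an `n`-cokernel of `d_C^{-1}`; all conditions are spelled out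
componentwise. -/
def IsNPushoutFam (n : ℕ) (X Y : CochainComplex C ℕ) (g : ∀ k, X.X k ⟶ Y.X k) : Prop :=
  (∀ k, k < n → X.d k (k+1) ≫ g (k+1) = g k ≫ Y.d k (k+1)) ∧
  (∀ j, 1 ≤ j → j < n → ∀ ⦃Z : C⦄ (u : X.X j ⟶ Z) (v : Y.X (j-1) ⟶ Z),
      X.d (j-1) j ≫ u = g (j-1) ≫ v → Y.d (j-2) (j-1) ≫ v = 0 →
      ∃ (u' : X.X (j+1) ⟶ Z) (v' : Y.X j ⟶ Z),
        u = g j ≫ v' - X.d j (j+1) ≫ u' ∧ v = Y.d (j-1) j ≫ v') ∧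
  (∀ ⦃Z : C⦄ (u : X.X n ⟶ Z) (v : Y.X (n-1) ⟶ Z),
      X.d (n-1) n ≫ u = g (n-1) ≫ v → Y.d (n-2) (n-1) ≫ v = 0 →
      ∃ w : Y.X n ⟶ Z, u = g n ≫ w ∧ v = Y.d (n-1) n ≫ w) ∧
  (∀ ⦃Z : C⦄ (w w' : Y.X n ⟶ Z),
      g n ≫ w = g n ≫ w' → Y.d (n-1) n ≫ w = Y.d (n-1) n ≫ w' → w = w')

/-- The same-shape dual notion: the diagram `g : X → Y` is an `n`-pullback diagram,
i.e. in the mapping cone the sequence `(d_C^{-1}, d_C^0, …, d_C^{n-2})` is an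
`n`-kernel of `d_C^{n-1}`. -/
def IsNPulledBackFam (n : ℕ) (X Y : CochainComplex C ℕ) (g : ∀ k, X.X k ⟶ Y.X k) : Prop :=
  (∀ k, k < n → X.d k (k+1) ≫ g (k+1) = g k ≫ Y.d k (k+1)) ∧
  (∀ ⦃Z : C⦄ (w w' : Z ⟶ X.X 0),
      w ≫ X.d 0 1 = w' ≫ X.d 0 1 → w ≫ g 0 = w' ≫ g 0 → w = w') ∧
  (∀ j, 1 ≤ j → j < n → ∀ ⦃Z : C⦄ (v : Z ⟶ X.X j) (u : Z ⟶ Y.X (j-1)),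
      v ≫ X.d j (j+1) = 0 → v ≫ g j + u ≫ Y.d (j-1) j = 0 →
      ∃ (w : Z ⟶ X.X (j-1)) (x : Z ⟶ Y.X (j-2)),
        v = -(w ≫ X.d (j-1) j) ∧ u = w ≫ g (j-1) + x ≫ Y.d (j-2) (j-1)) ∧
  (∀ ⦃Z : C⦄ (v : Z ⟶ X.X n) (u : Z ⟶ Y.X (n-1)),
      v ≫ g n + u ≫ Y.d (n-1) n = 0 →
      ∃ (w : Z ⟶ X.X (n-1)) (x : Z ⟶ Y.X (n-2)),
        v = -(w ≫ X.d (n-1) n) ∧ u = w ≫ g (n-1) + x ≫ Y.d (n-2) (n-1))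

/-- An `n`-pullback diagram of the sequence `(d_K^1, …, d_K^n)` of `K` along a morphism to
`K.X (n+1)`: here `Y` is a complex concentrated in degrees `0, …, n` (playing the role of
degrees `1, …, n+1`) and `g k : Y.X k ⟶ K.X (k+1)`. -/
def IsNPullbackAlongFam (n : ℕ) (Y K : CochainComplex C ℕ) (g : ∀ k, Y.X k ⟶ K.X (k+1)) :
    Prop :=
  (∀ k, k < n → Y.d k (k+1) ≫ g (k+1) = g k ≫ K.d (k+1) (k+2)) ∧
  (∀ ⦃Z : C⦄ (w w' : Z ⟶ Y.X 0),
      w ≫ Y.d 0 1 = w' ≫ Y.d 0 1 → w ≫ g 0 = w' ≫ g 0 → w = w') ∧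
  (∀ ⦃Z : C⦄ (v : Z ⟶ Y.X 1) (u : Z ⟶ K.X 1),
      v ≫ Y.d 1 2 = 0 → v ≫ g 1 = u ≫ K.d 1 2 →
      ∃ w : Z ⟶ Y.X 0, v = w ≫ Y.d 0 1 ∧ u = w ≫ g 0) ∧
  (∀ i, 1 ≤ i → i + 1 ≤ n → ∀ ⦃Z : C⦄ (v : Z ⟶ Y.X (i+1)) (u : Z ⟶ K.X (i+1)),
      v ≫ Y.d (i+1) (i+2) = 0 → v ≫ g (i+1) = u ≫ K.d (i+1) (i+2) →
      ∃ (w : Z ⟶ Y.X i) (u' : Z ⟶ K.X i),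
        v = w ≫ Y.d i (i+1) ∧ u = w ≫ g i - u' ≫ K.d i (i+1))

/-- A weak isomorphism of `n`-exact sequences: two consecutive components (cyclically,
with the convention `n+2 := 0`) are isomorphisms. -/
def IsWeakIsoHom (n : ℕ) {K L : CochainComplex C ℕ} (f : K ⟶ L) : Prop :=
  (∃ k, k ≤ n ∧ IsIso (f.f k) ∧ IsIso (f.f (k+1))) ∨ (IsIso (f.f (n+1)) ∧ IsIso (f.f 0))

/-- `f` is an admissible monomorphism for the class `Xcl`. -/
def IsAdmMono (Xcl : CochainComplex C ℕ → Prop) {A B : C} (f : A ⟶ B) : Prop :=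
  ∃ K, Xcl K ∧ ∃ (e0 : A ≅ K.X 0) (e1 : B ≅ K.X 1), e0.hom ≫ K.d 0 1 = f ≫ e1.hom

/-- `f` is an admissible epimorphism for the class `Xcl`. -/
def IsAdmEpi (n : ℕ) (Xcl : CochainComplex C ℕ → Prop) {A B : C} (f : A ⟶ B) : Prop :=
  ∃ K, Xcl K ∧ ∃ (e0 : A ≅ K.X n) (e1 : B ≅ K.X (n+1)), e0.hom ≫ K.d n (n+1) = f ≫ e1.hom

/-- `Xcl` is an `n`-exact structure on `C` (axioms (E0), (E1), (E1ᵒᵖ), (E2), (E2ᵒᵖ),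
together with closure under weak isomorphisms). -/
structure IsNExactStructure (n : ℕ) (Xcl : CochainComplex C ℕ → Prop) : Prop where
  mem_nExact : ∀ ⦃K⦄, Xcl K → IsNExactSeq n K
  mem_concentrated : ∀ ⦃K⦄, Xcl K → ConcentratedBelow (n+1) K
  closed_weakIso : ∀ ⦃K L : CochainComplex C ℕ⦄ (f : K ⟶ L),
    IsNExactSeq n K → ConcentratedBelow (n+1) K →
    IsNExactSeq n L → ConcentratedBelow (n+1) L →
    IsWeakIsoHom n f → (Xcl K ↔ Xcl L)
  zero_mem : ∃ K, Xcl K ∧ ∀ k, IsZero (K.X k)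
  admMono_comp : ∀ ⦃A B D : C⦄ (f : A ⟶ B) (g : B ⟶ D),
    IsAdmMono Xcl f → IsAdmMono Xcl g → IsAdmMono Xcl (f ≫ g)
  admEpi_comp : ∀ ⦃A B D : C⦄ (f : A ⟶ B) (g : B ⟶ D),
    IsAdmEpi n Xcl f → IsAdmEpi n Xcl g → IsAdmEpi n Xcl (f ≫ g)
  pushout : ∀ ⦃K⦄, Xcl K → ∀ ⦃Y0 : C⦄ (f0 : K.X 0 ⟶ Y0),
    ∃ (Y : CochainComplex C ℕ) (g : ∀ k, K.X k ⟶ Y.X k) (e : Y.X 0 ≅ Y0),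
      ConcentratedBelow n Y ∧ g 0 ≫ e.hom = f0 ∧ IsNPushoutFam n K Y g ∧
      IsAdmMono Xcl (Y.d 0 1)
  pullback : ∀ ⦃K⦄, Xcl K → ∀ ⦃Z0 : C⦄ (gn : Z0 ⟶ K.X (n+1)),
    ∃ (Y : CochainComplex C ℕ) (g : ∀ k, Y.X k ⟶ K.X (k+1)) (e : Y.X n ≅ Z0),
      ConcentratedBelow n Y ∧ e.hom ≫ gn = g n ∧ IsNPullbackAlongFam n Y K g ∧
      IsAdmEpi n Xcl (Y.d (n-1) n)

end NHomAlg

open NHomAlg in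
/-- **Comparison lemma.** If `X` is a non-negatively graded cochain complex in which each
differential `d^{k+1}` is a weak cokernel of `d^k`, and `f, g : X ⟶ Y` agree in degree `0`,
then there is a homotopy `h : f ∼ g` with `h^1 = 0`. -/
theorem comparison_lemma {C : Type u} [Category.{v} C] [Preadditive C]
    {X Y : CochainComplex C ℕ}
    (hX : ∀ k : ℕ, IsWeakCokernel (X.d k (k+1)) (X.d (k+1) (k+2)))
    (f g : X ⟶ Y) (h0 : f.f 0 = g.f 0) :
    ∃ h : Homotopy f g, h.hom 1 0 = 0 := by
  obtain ⟨one, hone⟩ := (hX 0).2 ((f - g).f 1) (by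
    rw [← (f - g).comm' 0 1 rfl]
    simp [h0])
  refine ⟨(Homotopy.equivSubZero).symm
    (Homotopy.mkCoinductive (f - g) 0 (by simp [h0]) one (by simp [hone.symm])
      (fun n p => ?_)), ?_⟩
  · obtain ⟨a, b, hab⟩ := p
    have hex := (hX (n+1)).2 ((f - g).f (n+2) - b ≫ Y.d (n+1) (n+2)) (by
      rw [Preadditive.comp_sub, ← (f - g).comm' (n+1) (n+2) rfl, hab]
      simp [Preadditive.add_comp, Category.assoc])
    exact ⟨hex.choose, by rw [hex.choose_spec]; abel⟩
  · show (Homotopy.mkCoinductive _ _ _ _ _ _).hom 1 0 = 0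
    simp [Homotopy.mkCoinductive]
end

section
/- Let C be an additive category and let X and Y be complexes concentrated in degrees 0 through n+1 that are isomorphic in the homotopy category K(C). Then X is an n-exact sequence if and only if Y is an n-exact sequence. In particular, every contractible complex with n+2 terms is an n-exact sequence. -/
open CategoryTheory CategoryTheory.Limits

universe v u

namespace NHomAlg

variable {C : Type u} [Category.{v} C] [Preadditive C]

lemma homotopy_comm_succ {K L : CochainComplex C ℕ} {a b : K ⟶ L} (H : Homotopy a b) (j : ℕ) :
    a.f (j+1) = K.d (j+1) (j+2) ≫ H.hom (j+2) (j+1) + H.hom (j+1) j ≫ L.d j (j+1) + b.f (j+1) := by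
  have h := H.comm (j+1)
  rwa [dNext_eq H.hom (show (ComplexShape.up ℕ).Rel (j+1) (j+2) from rfl),
    prevD_eq H.hom (show (ComplexShape.up ℕ).Rel j (j+1) from rfl)] at h

lemma homotopy_comm_zero {K L : CochainComplex C ℕ} {a b : K ⟶ L} (H : Homotopy a b) :
    a.f 0 = K.d 0 1 ≫ H.hom 1 0 + b.f 0 := by
  have h := H.comm 0
  rwa [dNext_eq H.hom (show (ComplexShape.up ℕ).Rel 0 1 from rfl),
    prevD_eq_zero H.hom 0 (by simp), add_zero] at h

/-- Transfer of `n`-exactness along a homotopy equivalence, one direction. -/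
lemma isNExactSeq_of_homotopyEquiv (n : ℕ) {X Y : CochainComplex C ℕ}
    (hY : ConcentratedBelow (n+1) Y) (e : HomotopyEquiv X Y)
    (hX : IsNExactSeq n X) : IsNExactSeq n Y := by
  obtain ⟨⟨hker, hker0⟩, ⟨hcok, hcokn⟩⟩ := hX
  set f : X ⟶ Y := e.hom with hf
  set g : Y ⟶ X := e.inv with hg
  set H : Homotopy (g ≫ f) (𝟙 Y) := e.homotopyInvHomId with hH
  refine ⟨⟨?_, ?_⟩, ⟨?_, ?_⟩⟩
  · -- n-kernel factorizations
    intro k hk1 hkn Z h hd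
    obtain ⟨j, rfl⟩ : ∃ j, k = j + 1 := ⟨k - 1, (Nat.succ_pred_eq_of_pos hk1).symm⟩
    have hd' : h ≫ Y.d (j+1) (j+2) = 0 := hd
    obtain ⟨p, hp⟩ : ∃ p : Z ⟶ X.X j, p ≫ X.d j (j+1) = h ≫ g.f (j+1) := by
      have := hker (j+1) hk1 hkn (h := h ≫ g.f (j+1)) (by
        rw [Category.assoc, g.comm (j+1) (j+2), ← Category.assoc, hd', zero_comp])
      simpa using this
    refine ⟨p ≫ f.f j - h ≫ H.hom (j+1) j, ?_⟩
    have hc := homotopy_comm_succ H j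
    simp only [HomologicalComplex.comp_f, HomologicalComplex.id_f] at hc
    calc (p ≫ f.f j - h ≫ H.hom (j+1) j) ≫ Y.d j (j+1)
        = p ≫ (f.f j ≫ Y.d j (j+1)) - h ≫ (H.hom (j+1) j ≫ Y.d j (j+1)) := by
          simp [Preadditive.sub_comp]
      _ = p ≫ (X.d j (j+1) ≫ f.f (j+1))
            - h ≫ (g.f (j+1) ≫ f.f (j+1) - Y.d (j+1) (j+2) ≫ H.hom (j+2) (j+1)
              - 𝟙 (Y.X (j+1))) := by
          rw [f.comm j (j+1)]
          congr 2
          rw [hc]; abel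
      _ = (p ≫ X.d j (j+1)) ≫ f.f (j+1) - (h ≫ g.f (j+1)) ≫ f.f (j+1)
            + (h ≫ Y.d (j+1) (j+2)) ≫ H.hom (j+2) (j+1) + h := by
          simp only [Preadditive.comp_sub, Category.assoc, Category.comp_id]
          abel
      _ = h := by rw [hp, hd', zero_comp]; abel
  · -- mono condition in degree 0
    intro Z h h' hhh
    have hu : (h - h') ≫ Y.d 0 1 = 0 := by
      rw [Preadditive.sub_comp, hhh, sub_self]
    have hug : (h - h') ≫ g.f 0 = 0 := by
      refine hker0 (h := (h - h') ≫ g.f 0) (h' := 0) ?_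
      rw [zero_comp, Category.assoc, g.comm 0 1, ← Category.assoc, hu, zero_comp]
    have hc := homotopy_comm_zero H
    simp only [HomologicalComplex.comp_f, HomologicalComplex.id_f] at hc
    have key : (h - h') ≫ (g.f 0 ≫ f.f 0) = h - h' := by
      rw [hc, Preadditive.comp_add, Category.comp_id, ← Category.assoc, hu, zero_comp,
        zero_add]
    rw [← Category.assoc, hug, zero_comp] at key
    exact sub_eq_zero.mp key.symm
  · -- n-cokernel factorizations
    intro k hk1 hkn Z h hd
    obtain ⟨j, rfl⟩ : ∃ j, k = j + 1 := ⟨k - 1, (Nat.succ_pred_eq_of_pos hk1).symm⟩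
    have hd' : Y.d j (j+1) ≫ h = 0 := by simpa using hd
    obtain ⟨p, hp⟩ : ∃ p : X.X (j+2) ⟶ Z, X.d (j+1) (j+2) ≫ p = f.f (j+1) ≫ h := by
      have := hcok (j+1) hk1 hkn (h := f.f (j+1) ≫ h) (by
        have h2 : X.d j (j+1) ≫ f.f (j+1) ≫ h = f.f j ≫ Y.d j (j+1) ≫ h := by
          rw [← Category.assoc, ← f.comm j (j+1), Category.assoc]
        show X.d j (j+1) ≫ f.f (j+1) ≫ h = 0
        rw [h2, hd', comp_zero])
      simpa using this
    refine ⟨g.f (j+2) ≫ p - H.hom (j+2) (j+1) ≫ h, ?_⟩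
    have hc := homotopy_comm_succ H j
    simp only [HomologicalComplex.comp_f, HomologicalComplex.id_f] at hc
    calc Y.d (j+1) (j+2) ≫ (g.f (j+2) ≫ p - H.hom (j+2) (j+1) ≫ h)
        = (Y.d (j+1) (j+2) ≫ g.f (j+2)) ≫ p
            - (Y.d (j+1) (j+2) ≫ H.hom (j+2) (j+1)) ≫ h := by
          simp [Preadditive.comp_sub]
      _ = (g.f (j+1) ≫ X.d (j+1) (j+2)) ≫ p
            - (g.f (j+1) ≫ f.f (j+1) - H.hom (j+1) j ≫ Y.d j (j+1)
              - 𝟙 (Y.X (j+1))) ≫ h := by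
          rw [← g.comm (j+1) (j+2)]
          congr 2
          rw [hc]; abel
      _ = g.f (j+1) ≫ (X.d (j+1) (j+2) ≫ p) - g.f (j+1) ≫ (f.f (j+1) ≫ h)
            + H.hom (j+1) j ≫ (Y.d j (j+1) ≫ h) + h := by
          simp only [Preadditive.sub_comp, Category.assoc, Category.id_comp]
          abel
      _ = h := by rw [hp, hd', comp_zero]; abel
  · -- epi-type condition in degree n+1
    intro Z h h' hhh
    have hu : Y.d n (n+1) ≫ (h - h') = 0 := by
      rw [Preadditive.comp_sub, hhh, sub_self]
    have huf : f.f (n+1) ≫ (h - h') = 0 := by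
      refine hcokn (h := f.f (n+1) ≫ (h - h')) (h' := 0) ?_
      rw [comp_zero, ← Category.assoc, ← f.comm n (n+1), Category.assoc, hu, comp_zero]
    have hc := homotopy_comm_succ H n
    simp only [HomologicalComplex.comp_f, HomologicalComplex.id_f] at hc
    have hzero : H.hom (n+2) (n+1) = 0 := (hY (n+2) (by omega)).eq_of_src _ _
    rw [hzero, comp_zero, zero_add] at hc
    have key : (g.f (n+1) ≫ f.f (n+1)) ≫ (h - h') = h - h' := by
      rw [hc, Preadditive.add_comp, Category.id_comp, Category.assoc, hu, comp_zero,
        zero_add]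
    rw [Category.assoc, huf, comp_zero] at key
    exact sub_eq_zero.mp key.symm

/-- A contractible complex concentrated below `n+1` is `n`-exact. -/
lemma isNExactSeq_of_contractible (n : ℕ) {Z : CochainComplex C ℕ}
    (hZ : ConcentratedBelow (n+1) Z) (H : Homotopy (𝟙 Z) 0) : IsNExactSeq n Z := by
  refine ⟨⟨?_, ?_⟩, ⟨?_, ?_⟩⟩
  · intro k hk1 hkn W h hd
    obtain ⟨j, rfl⟩ : ∃ j, k = j + 1 := ⟨k - 1, (Nat.succ_pred_eq_of_pos hk1).symm⟩
    have hd' : h ≫ Z.d (j+1) (j+2) = 0 := hd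
    have hc := homotopy_comm_succ H j
    simp only [HomologicalComplex.id_f, HomologicalComplex.zero_f, add_zero] at hc
    refine ⟨h ≫ H.hom (j+1) j, ?_⟩
    have key : h ≫ 𝟙 (Z.X (j+1))
        = h ≫ (Z.d (j+1) (j+2) ≫ H.hom (j+2) (j+1)) + h ≫ (H.hom (j+1) j ≫ Z.d j (j+1)) := by
      rw [hc, Preadditive.comp_add]
    rw [Category.comp_id, ← Category.assoc, hd', zero_comp, zero_add, ← Category.assoc] at key
    exact key.symm
  · intro W h h' hhh
    have hu : (h - h') ≫ Z.d 0 1 = 0 := by rw [Preadditive.sub_comp, hhh, sub_self]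
    have hc := homotopy_comm_zero H
    simp only [HomologicalComplex.id_f, HomologicalComplex.zero_f, add_zero] at hc
    have key : (h - h') ≫ 𝟙 (Z.X 0) = (h - h') ≫ (Z.d 0 1 ≫ H.hom 1 0) := by rw [hc]
    rw [Category.comp_id, ← Category.assoc, hu, zero_comp] at key
    exact sub_eq_zero.mp key
  · intro k hk1 hkn W h hd
    obtain ⟨j, rfl⟩ : ∃ j, k = j + 1 := ⟨k - 1, (Nat.succ_pred_eq_of_pos hk1).symm⟩
    have hd' : Z.d j (j+1) ≫ h = 0 := by simpa using hd
    have hc := homotopy_comm_succ H j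
    simp only [HomologicalComplex.id_f, HomologicalComplex.zero_f, add_zero] at hc
    refine ⟨H.hom (j+2) (j+1) ≫ h, ?_⟩
    have key : 𝟙 (Z.X (j+1)) ≫ h
        = (Z.d (j+1) (j+2) ≫ H.hom (j+2) (j+1)) ≫ h
          + (H.hom (j+1) j ≫ Z.d j (j+1)) ≫ h := by
      rw [hc, Preadditive.add_comp]
    rw [Category.id_comp, Category.assoc (H.hom (j+1) j), hd', comp_zero, add_zero,
      Category.assoc] at key
    exact key.symm
  · intro W h h' hhh
    have hu : Z.d n (n+1) ≫ (h - h') = 0 := by rw [Preadditive.comp_sub, hhh, sub_self]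
    have hc := homotopy_comm_succ H n
    simp only [HomologicalComplex.id_f, HomologicalComplex.zero_f, add_zero] at hc
    have hzero : H.hom (n+2) (n+1) = 0 := (hZ (n+2) (by omega)).eq_of_src _ _
    rw [hzero, comp_zero, zero_add] at hc
    have key : 𝟙 (Z.X (n+1)) ≫ (h - h') = (H.hom (n+1) n ≫ Z.d n (n+1)) ≫ (h - h') := by
      rw [hc]
    rw [Category.id_comp, Category.assoc, hu, comp_zero] at key
    exact sub_eq_zero.mp key

end NHomAlg

open NHomAlg in
/-- If two complexes concentrated in degrees `0, …, n+1` are isomorphic in the homotopy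
category `K(C)`, then one is an `n`-exact sequence iff the other one is; in particular
every contractible complex with `n+2` terms is an `n`-exact sequence. -/
theorem nExact_closed_under_homotopy_equivalence {C : Type u} [Category.{v} C]
    [Preadditive C] (n : ℕ) (hn : 1 ≤ n) (X Y : CochainComplex C ℕ)
    (hX : ConcentratedBelow (n+1) X) (hY : ConcentratedBelow (n+1) Y)
    (e : Nonempty ((HomotopyCategory.quotient C (ComplexShape.up ℕ)).obj X ≅
      (HomotopyCategory.quotient C (ComplexShape.up ℕ)).obj Y)) :
    (IsNExactSeq n X ↔ IsNExactSeq n Y) ∧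
    (∀ Z : CochainComplex C ℕ, ConcentratedBelow (n+1) Z →
      Nonempty (Homotopy (𝟙 Z) 0) → IsNExactSeq n Z) := by
  obtain ⟨i⟩ := e
  have he : HomotopyEquiv X Y := HomotopyCategory.homotopyEquivOfIso i
  exact ⟨⟨fun h => isNExactSeq_of_homotopyEquiv n hY he h,
    fun h => isNExactSeq_of_homotopyEquiv n hX he.symm h⟩,
    fun Z hZ hH => isNExactSeq_of_contractible n hZ hH.some⟩
end

section
/- Let C be an additive category and X a complex concentrated in degrees 0 through n+1 such that (d^1,...,d^n) is an n-cokernel of d^0. Then d^0 is a split monomorphism if and only if X is a contractible n-exact sequence. -/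
open CategoryTheory CategoryTheory.Limits

universe v u

namespace NHomAlg

variable {C : Type u} [Category.{v} C]

variable [Preadditive C]

/-- Key inductive step: given the homotopy identity in degree `k`, produce the next
component of the contracting homotopy. -/
lemma homotopy_step {n : ℕ} (hn : 1 ≤ n) {X : CochainComplex C ℕ}
    (hX : ConcentratedBelow (n+1) X) (hco : IsNCokernelSeq n X)
    (k : ℕ) (f : X.X k ⟶ X.X (k-1)) (f' : X.X (k+1) ⟶ X.X k)
    (h : 𝟙 (X.X k) = f ≫ X.d (k-1) k + X.d k (k+1) ≫ f') :
    ∃ f'' : X.X (k+2) ⟶ X.X (k+1),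
      𝟙 (X.X (k+1)) = f' ≫ X.d k (k+1) + X.d (k+1) (k+2) ≫ f'' := by
  have he : X.d k (k+1) ≫ (𝟙 (X.X (k+1)) - f' ≫ X.d k (k+1)) = 0 := by
    have h2 : X.d k (k+1) = (f ≫ X.d (k-1) k + X.d k (k+1) ≫ f') ≫ X.d k (k+1) := by
      rw [← h]; simp
    simp only [Preadditive.add_comp, Category.assoc, HomologicalComplex.d_comp_d,
      comp_zero, zero_add] at h2
    simp only [Preadditive.comp_sub, Category.comp_id, ← Category.assoc, ← h2, sub_self]
  by_cases h1 : k + 1 ≤ n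
  · obtain ⟨p, hp⟩ := hco.1 (k+1) (Nat.le_add_left 1 k) h1
      (𝟙 (X.X (k+1)) - f' ≫ X.d k (k+1)) he
    refine ⟨p, ?_⟩
    rw [hp]; abel
  · by_cases h2 : k = n
    · have hz : 𝟙 (X.X (k+1)) - f' ≫ X.d k (k+1) = 0 := by
        subst h2
        exact hco.2 _ 0 (by rw [comp_zero]; exact he)
      exact ⟨0, by rw [comp_zero, add_zero, sub_eq_zero.mp hz]⟩
    · exact ⟨0, (hX (k+1) (by omega)).eq_of_src _ _⟩

end NHomAlg

open NHomAlg in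
/-- Let `X` be a complex concentrated in degrees `0, …, n+1` such that `(d^1, …, d^n)` is an
`n`-cokernel of `d^0`. Then `d^0` is a split monomorphism iff `X` is a contractible
`n`-exact sequence. -/
theorem splitMono_iff_contractible {C : Type u} [Category.{v} C] [Preadditive C]
    (n : ℕ) (hn : 1 ≤ n) (X : CochainComplex C ℕ)
    (hX : ConcentratedBelow (n+1) X) (hco : IsNCokernelSeq n X) :
    IsSplitMono (X.d 0 1) ↔ (Nonempty (Homotopy (𝟙 X) 0) ∧ IsNExactSeq n X) := by
  constructor
  · intro hsm
    set r : X.X 1 ⟶ X.X 0 := retraction (X.d 0 1) with hr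
    have hrid : X.d 0 1 ≫ r = 𝟙 (X.X 0) := IsSplitMono.id (X.d 0 1)
    -- the homotopy identity in degree 0
    have comm0 : 𝟙 (X.X 0) = (0 : X.X 0 ⟶ X.X (0-1)) ≫ X.d (0-1) 0 + X.d 0 1 ≫ r := by
      rw [zero_comp, zero_add, hrid]
    -- construct all components of the contracting homotopy
    obtain ⟨h2, comm1⟩ := homotopy_step hn hX hco 0 0 r comm0
    -- build the homotopy via `Homotopy.mkCoinductive`
    have hty : Homotopy (𝟙 X) 0 := by
      refine Homotopy.mkCoinductive (𝟙 X) r (by simpa using comm0) h2 (by simpa using comm1)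
        (fun m p => ?_)
      obtain ⟨f, f', hf⟩ := p
      have hf' : 𝟙 (X.X (m+1)) = f ≫ X.d ((m+1)-1) (m+1) + X.d (m+1) (m+2) ≫ f' := by
        simpa using hf
      obtain hstep := homotopy_step hn hX hco (m+1) f f' hf'
      exact ⟨hstep.choose, by simpa using hstep.choose_spec⟩
    refine ⟨⟨hty⟩, ⟨?_, hco⟩⟩
    constructor
    · intro k hk1 hkn Z v hv
      obtain ⟨j, rfl⟩ : ∃ j, k = j + 1 := ⟨k - 1, by omega⟩
      have hc := hty.comm (j+1)
      simp only [HomologicalComplex.id_f, HomologicalComplex.zero_f_apply, add_zero,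
        Homotopy.dNext_cochainComplex, Homotopy.prevD_succ_cochainComplex] at hc
      refine ⟨v ≫ hty.hom (j+1) j, ?_⟩
      have key : v = (v ≫ hty.hom (j+1) j) ≫ X.d j (j+1) := by
        calc v = v ≫ 𝟙 (X.X (j+1)) := by rw [Category.comp_id]
        _ = (v ≫ X.d (j+1) (j+2)) ≫ hty.hom (j+2) (j+1)
              + (v ≫ hty.hom (j+1) j) ≫ X.d j (j+1) := by
            rw [Category.assoc, Category.assoc, ← Preadditive.comp_add, ← hc]
        _ = (v ≫ hty.hom (j+1) j) ≫ X.d j (j+1) := by rw [hv, zero_comp, zero_add]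
      exact key.symm
    · intro Z g g' hg
      have : g ≫ X.d 0 1 ≫ r = g' ≫ X.d 0 1 ≫ r := by
        rw [← Category.assoc, ← Category.assoc, hg]
      simpa [hrid] using this
  · rintro ⟨⟨hty⟩, _⟩
    have hc := hty.comm 0
    simp only [HomologicalComplex.id_f, HomologicalComplex.zero_f_apply, add_zero,
      Homotopy.dNext_cochainComplex, Homotopy.prevD_zero_cochainComplex] at hc
    exact IsSplitMono.mk' ⟨hty.hom 1 0, hc.symm⟩
end

section
/- Let C be an additive category and f : X → Y a morphism of n-exact sequences such that f^k and f^{k+1} are isomorphisms for some k in {1,...,n}. Then f induces an isomorphism in the homotopy category K(C). -/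
open CategoryTheory CategoryTheory.Limits

universe v u

open NHomAlg in
/-- Construction of a chain-level inverse of `f`, given that `f` is an isomorphism in
degrees `k` and `k+1`. -/
private lemma exists_chain_inv {C : Type u} [Category.{v} C] [Preadditive C]
    (n : ℕ) {X Y : CochainComplex C ℕ} (f : X ⟶ Y)
    (hXker : IsNKernelSeq n X) (hYcok : IsNCokernelSeq n Y)
    (hXc : ConcentratedBelow (n+1) X)
    (k : ℕ) (hk1 : 1 ≤ k) (hk2 : k ≤ n)
    (hfk : IsIso (f.f k)) (hfk1 : IsIso (f.f (k+1))) :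
    ∃ g : ∀ j, Y.X j ⟶ X.X j, g k = inv (f.f k) ∧ g (k+1) = inv (f.f (k+1)) ∧
      ∀ j, Y.d j (j+1) ≫ g (j+1) = g j ≫ X.d j (j+1) := by
  have comm_base : Y.d k (k+1) ≫ inv (f.f (k+1)) = inv (f.f k) ≫ X.d k (k+1) := by
    rw [← cancel_epi (f.f k)]
    conv_lhs => rw [← Category.assoc, f.comm k (k+1)]
    simp
  -- Upward construction
  have up : ∀ m : ℕ, ∃ g : ∀ j, Y.X j ⟶ X.X j,
      g k = inv (f.f k) ∧ g (k+1) = inv (f.f (k+1)) ∧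
      ∀ j, k ≤ j → j < m → Y.d j (j+1) ≫ g (j+1) = g j ≫ X.d j (j+1) := by
    intro m
    induction m with
    | zero =>
      refine ⟨Function.update (Function.update (fun j => 0) k (inv (f.f k))) (k+1)
        (inv (f.f (k+1))), ?_, ?_, ?_⟩
      · rw [Function.update_of_ne (by omega), Function.update_self]
      · rw [Function.update_self]
      · intro j h1 h2; omega
    | succ m ih =>
      obtain ⟨g, hg0, hg1, hgc⟩ := ih
      by_cases hmk : m < k
      · exact ⟨g, hg0, hg1, fun j h1 h2 => hgc j h1 (by omega)⟩
      by_cases hmk2 : m = k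
      · refine ⟨g, hg0, hg1, fun j h1 h2 => ?_⟩
        rcases Nat.lt_or_ge j m with hj | hj
        · exact hgc j h1 hj
        · have : j = k := by omega
          subst this
          rw [hg0, hg1]; exact comm_base
      have hm1 : k + 1 ≤ m := by omega
      by_cases hmn : m ≤ n
      · obtain ⟨j0, rfl⟩ : ∃ j0, m = j0 + 1 := ⟨m - 1, by omega⟩
        have hcond : Y.d j0 (j0+1) ≫ (g (j0+1) ≫ X.d (j0+1) (j0+1+1)) = 0 := by
          rw [← Category.assoc, hgc j0 (by omega) (by omega), Category.assoc,
            HomologicalComplex.d_comp_d, comp_zero]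
        obtain ⟨p, hp⟩ := hYcok.1 (j0+1) (by omega) (by omega) _ hcond
        refine ⟨Function.update g (j0+1+1) p, ?_, ?_, ?_⟩
        · rw [Function.update_of_ne (by omega)]; exact hg0
        · rw [Function.update_of_ne (by omega)]; exact hg1
        · intro j h1 h2
          rcases Nat.lt_or_ge j (j0+1) with hj | hj
          · rw [Function.update_of_ne (by omega), Function.update_of_ne (by omega)]
            exact hgc j h1 hj
          · have : j = j0 + 1 := by omega
            subst this
            rw [Function.update_self, Function.update_of_ne (by omega)]
            exact hp
      · refine ⟨g, hg0, hg1, fun j h1 h2 => ?_⟩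
        rcases Nat.lt_or_ge j m with hj | hj
        · exact hgc j h1 hj
        · have : j = m := by omega
          subst this
          exact (hXc (j+1) (by omega)).eq_of_tgt _ _
  obtain ⟨g, hg0, hg1, hgc⟩ := up (n+2)
  have hup : ∀ j, k ≤ j → Y.d j (j+1) ≫ g (j+1) = g j ≫ X.d j (j+1) := by
    intro j hj
    rcases Nat.lt_or_ge j (n+2) with h | h
    · exact hgc j hj h
    · exact (hXc (j+1) (by omega)).eq_of_tgt _ _
  -- Downward construction
  have down : ∀ m : ℕ, ∃ g : ∀ j, Y.X j ⟶ X.X j,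
      g k = inv (f.f k) ∧ g (k+1) = inv (f.f (k+1)) ∧
      (∀ j, k ≤ j → Y.d j (j+1) ≫ g (j+1) = g j ≫ X.d j (j+1)) ∧
      (∀ j, k - m ≤ j → j < k → Y.d j (j+1) ≫ g (j+1) = g j ≫ X.d j (j+1)) := by
    intro m
    induction m with
    | zero => exact ⟨g, hg0, hg1, hup, fun j h1 h2 => by omega⟩
    | succ m ih =>
      obtain ⟨g, hg0, hg1, hgu, hgd⟩ := ih
      by_cases hkm : k ≤ m
      · exact ⟨g, hg0, hg1, hgu, fun j h1 h2 => hgd j (by omega) h2⟩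
      obtain ⟨j0, hj0⟩ : ∃ j0, j0 + 1 = k - m := ⟨k - m - 1, by omega⟩
      have hcomm1 : Y.d (j0+1) (j0+1+1) ≫ g (j0+1+1) = g (j0+1) ≫ X.d (j0+1) (j0+1+1) := by
        rcases Nat.lt_or_ge (j0+1) k with h | h
        · exact hgd (j0+1) (by omega) h
        · exact hgu (j0+1) h
      have hcond : (Y.d j0 (j0+1) ≫ g (j0+1)) ≫ X.d (j0+1) (j0+1+1) = 0 := by
        rw [Category.assoc, ← hcomm1, ← Category.assoc, HomologicalComplex.d_comp_d,
          zero_comp]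
      obtain ⟨p, hp⟩ := hXker.1 (j0+1) (by omega) (by omega) _ hcond
      refine ⟨Function.update g j0 p, ?_, ?_, ?_, ?_⟩
      · rw [Function.update_of_ne (by omega)]; exact hg0
      · rw [Function.update_of_ne (by omega)]; exact hg1
      · intro j hj
        rw [Function.update_of_ne (by omega), Function.update_of_ne (by omega)]
        exact hgu j hj
      · intro j h1 h2
        rcases Nat.lt_or_ge j0 j with hj | hj
        · rw [Function.update_of_ne (by omega), Function.update_of_ne (by omega)]
          exact hgd j (by omega) h2
        · have : j = j0 := by omega
          subst this
          rw [Function.update_of_ne (by omega), Function.update_self]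
          exact hp.symm
  obtain ⟨g', a, b, cu, cd⟩ := down k
  refine ⟨g', a, b, fun j => ?_⟩
  rcases Nat.lt_or_ge j k with h | h
  · exact cd j (by omega) h
  · exact cu j h

open NHomAlg in
/-- A chain endomorphism of an `n`-exact sequence vanishing in two consecutive degrees
`k, k+1` (`1 ≤ k ≤ n`) is null-homotopic. -/
private lemma nullHomotopy_of_vanishing {C : Type u} [Category.{v} C] [Preadditive C]
    (n : ℕ) {W : CochainComplex C ℕ} (hW : IsNExactSeq n W)
    (hWc : ConcentratedBelow (n+1) W) (φ : W ⟶ W)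
    (k : ℕ) (hk1 : 1 ≤ k) (hk2 : k ≤ n)
    (hφk : φ.f k = 0) (hφk1 : φ.f (k+1) = 0) :
    Nonempty (Homotopy φ 0) := by
  obtain ⟨hker, hcok⟩ := hW
  -- Upward construction of the homotopy
  have up : ∀ m : ℕ, ∃ s : ∀ j, W.X (j+1) ⟶ W.X j, s k = 0 ∧
      ∀ i, k ≤ i → i < m →
        φ.f (i+1) = W.d (i+1) (i+1+1) ≫ s (i+1) + s i ≫ W.d i (i+1) := by
    intro m
    induction m with
    | zero => exact ⟨fun j => 0, rfl, fun i h1 h2 => by omega⟩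
    | succ m ih =>
      obtain ⟨s, hs0, hsc⟩ := ih
      by_cases hmk : m < k
      · exact ⟨s, hs0, fun i h1 h2 => hsc i h1 (by omega)⟩
      by_cases hmk2 : m = k
      · subst hmk2
        refine ⟨Function.update s (m+1) 0, ?_, ?_⟩
        · rw [Function.update_of_ne (by omega)]; exact hs0
        · intro i h1 h2
          have : i = m := by omega
          subst this
          rw [Function.update_self, Function.update_of_ne (by omega), hs0, hφk1]
          simp
      have hm1 : k + 1 ≤ m := by omega
      obtain ⟨i0, rfl⟩ : ∃ i0, m = i0 + 1 := ⟨m - 1, by omega⟩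
      have hR := hsc i0 (by omega) (by omega)
      have e1 : W.d (i0+1) (i0+1+1) ≫ s (i0+1) = φ.f (i0+1) - s i0 ≫ W.d i0 (i0+1) := by
        rw [hR]; abel
      by_cases hmn : i0 + 1 ≤ n - 1
      · have hcond : W.d (i0+1) (i0+1+1) ≫
            (φ.f (i0+1+1) - s (i0+1) ≫ W.d (i0+1) (i0+1+1)) = 0 := by
          rw [Preadditive.comp_sub, ← φ.comm (i0+1) (i0+1+1), ← Category.assoc, e1,
            Preadditive.sub_comp, Category.assoc, HomologicalComplex.d_comp_d, comp_zero,
            sub_zero, sub_self]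
        obtain ⟨p, hp⟩ := hcok.1 (i0+1+1) (by omega) (by omega) _ hcond
        refine ⟨Function.update s (i0+1+1) p, ?_, ?_⟩
        · rw [Function.update_of_ne (by omega)]; exact hs0
        · intro i h1 h2
          rcases Nat.lt_or_ge i (i0+1) with hi | hi
          · rw [Function.update_of_ne (by omega), Function.update_of_ne (by omega)]
            exact hsc i h1 hi
          · have : i = i0 + 1 := by omega
            subst this
            rw [Function.update_self, Function.update_of_ne (by omega), hp]
            abel
      · by_cases hmn2 : i0 + 1 ≤ n
        · -- i0 + 1 = n : top step using that `d n (n+1)` is an epimorphism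
          have hin : i0 + 1 = n := by omega
          refine ⟨Function.update s (i0+1+1) 0, ?_, ?_⟩
          · rw [Function.update_of_ne (by omega)]; exact hs0
          · intro i h1 h2
            rcases Nat.lt_or_ge i (i0+1) with hi | hi
            · rw [Function.update_of_ne (by omega), Function.update_of_ne (by omega)]
              exact hsc i h1 hi
            · have : i = i0 + 1 := by omega
              subst this
              rw [Function.update_self, Function.update_of_ne (by omega)]
              rw [comp_zero, zero_add]
              subst hin
              apply hcok.2
              rw [← Category.assoc, e1, Preadditive.sub_comp, Category.assoc,
                HomologicalComplex.d_comp_d, comp_zero, sub_zero, φ.comm]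
        · -- i0 + 1 ≥ n + 1 : everything vanishes
          refine ⟨s, hs0, ?_⟩
          intro i h1 h2
          rcases Nat.lt_or_ge i (i0+1) with hi | hi
          · exact hsc i h1 hi
          · have : i = i0 + 1 := by omega
            subst this
            exact (hWc (i0+1+1) (by omega)).eq_of_src _ _
  obtain ⟨s, hs0, hsc⟩ := up (n+2)
  have hupAll : ∀ i, k ≤ i →
      φ.f (i+1) = W.d (i+1) (i+1+1) ≫ s (i+1) + s i ≫ W.d i (i+1) := by
    intro i hi
    rcases Nat.lt_or_ge i (n+2) with h | h
    · exact hsc i hi h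
    · exact (hWc (i+1) (by omega)).eq_of_src _ _
  -- Downward construction
  have down : ∀ m : ℕ, ∃ s : ∀ j, W.X (j+1) ⟶ W.X j,
      (∀ i, k ≤ i → φ.f (i+1) = W.d (i+1) (i+1+1) ≫ s (i+1) + s i ≫ W.d i (i+1)) ∧
      (∀ i, k - m ≤ i → i < k →
        φ.f (i+1) = W.d (i+1) (i+1+1) ≫ s (i+1) + s i ≫ W.d i (i+1)) := by
    intro m
    induction m with
    | zero => exact ⟨s, hupAll, fun i h1 h2 => by omega⟩
    | succ m ih =>
      obtain ⟨s, hsu, hsd⟩ := ih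
      by_cases hkm : k ≤ m
      · exact ⟨s, hsu, fun i h1 h2 => hsd i (by omega) h2⟩
      obtain ⟨i0, hi0⟩ : ∃ i0, i0 + 1 = k - m := ⟨k - m - 1, by omega⟩
      have hR1 : φ.f (i0+1+1) =
          W.d (i0+1+1) (i0+1+1+1) ≫ s (i0+1+1) + s (i0+1) ≫ W.d (i0+1) (i0+1+1) := by
        rcases Nat.lt_or_ge (i0+1) k with h | h
        · exact hsd (i0+1) (by omega) h
        · exact hsu (i0+1) h
      have e1 : s (i0+1) ≫ W.d (i0+1) (i0+1+1) =
          φ.f (i0+1+1) - W.d (i0+1+1) (i0+1+1+1) ≫ s (i0+1+1) := by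
        rw [hR1]; abel
      have hcond : (φ.f (i0+1) - W.d (i0+1) (i0+1+1) ≫ s (i0+1)) ≫
          W.d (i0+1) (i0+1+1) = 0 := by
        rw [Preadditive.sub_comp, φ.comm (i0+1) (i0+1+1), Category.assoc, e1,
          Preadditive.comp_sub, ← Category.assoc, HomologicalComplex.d_comp_d, zero_comp,
          sub_zero, sub_self]
      obtain ⟨p, hp⟩ := hker.1 (i0+1) (by omega) (by omega) _ hcond
      have hp2 : p ≫ W.d i0 (i0+1) = φ.f (i0+1) - W.d (i0+1) (i0+1+1) ≫ s (i0+1) := hp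
      refine ⟨Function.update s i0 p, ?_, ?_⟩
      · intro i hi
        rw [Function.update_of_ne (by omega), Function.update_of_ne (by omega)]
        exact hsu i hi
      · intro i h1 h2
        rcases Nat.lt_or_ge i0 i with hi | hi
        · rw [Function.update_of_ne (by omega), Function.update_of_ne (by omega)]
          exact hsd i (by omega) h2
        · have : i = i0 := by omega
          subst this
          rw [Function.update_of_ne (by omega), Function.update_self, hp2]
          abel
  obtain ⟨s, hsu, hsd⟩ := down k
  have hall : ∀ i, φ.f (i+1) = W.d (i+1) (i+1+1) ≫ s (i+1) + s i ≫ W.d i (i+1) := by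
    intro i
    rcases Nat.lt_or_ge i k with h | h
    · exact hsd i (by omega) h
    · exact hsu i h
  have hz : φ.f 0 = W.d 0 1 ≫ s 0 := by
    apply hker.2
    have hR0 := hall 0
    rw [φ.comm 0 1, hR0, Preadditive.comp_add, ← Category.assoc,
      HomologicalComplex.d_comp_d, zero_comp, zero_add, Category.assoc]
  -- Assemble the homotopy
  refine ⟨⟨fun i j => if h : j + 1 = i then eqToHom (congrArg W.X h.symm) ≫ s j else 0,
    ?_, ?_⟩⟩
  · intro i j hij
    rw [dif_neg]
    intro h
    exact hij (by simpa using h)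
  · intro i
    have hd : (dNext i) (fun i j => if h : j + 1 = i then
        eqToHom (congrArg W.X h.symm) ≫ s j else 0) = W.d i (i+1) ≫ s i := by
      rw [dNext_eq _ (show (ComplexShape.up ℕ).Rel i (i+1) by simp)]
      simp
    cases i with
    | zero =>
      have hp : (prevD 0) (fun i j => if h : j + 1 = i then
          eqToHom (congrArg W.X h.symm) ≫ s j else 0) = 0 := by
        show _ ≫ W.d _ 0 = 0
        rw [W.shape _ 0 (by simp), comp_zero]
      rw [hd, hp]
      simpa using hz
    | succ i =>
      have hp : (prevD (i+1)) (fun i j => if h : j + 1 = i then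
          eqToHom (congrArg W.X h.symm) ≫ s j else 0) = s i ≫ W.d i (i+1) := by
        rw [prevD_eq _ (show (ComplexShape.up ℕ).Rel i (i+1) by simp)]
        simp
      rw [hd, hp]
      simpa using hall i

open NHomAlg in
/-- A morphism of `n`-exact sequences whose components in two consecutive degrees
`k, k+1` (for some `1 ≤ k ≤ n`) are isomorphisms induces an isomorphism in the
homotopy category `K(C)`. -/
theorem weakIso_induces_homotopy_equivalence {C : Type u} [Category.{v} C] [Preadditive C]
    (n : ℕ) (hn : 1 ≤ n) {X Y : CochainComplex C ℕ} (f : X ⟶ Y)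
    (hX : IsNExactSeq n X) (hXc : ConcentratedBelow (n+1) X)
    (hY : IsNExactSeq n Y) (hYc : ConcentratedBelow (n+1) Y)
    (k : ℕ) (hk1 : 1 ≤ k) (hk2 : k ≤ n)
    (hfk : IsIso (f.f k)) (hfk1 : IsIso (f.f (k+1))) :
    IsIso ((HomotopyCategory.quotient C (ComplexShape.up ℕ)).map f) := by
  obtain ⟨g, hg0, hg1, hgc⟩ := exists_chain_inv n f hX.1 hY.2 hXc k hk1 hk2 hfk hfk1
  have hGcomm : ∀ (i j : ℕ), (ComplexShape.up ℕ).Rel i j → g i ≫ X.d i j = Y.d i j ≫ g j := by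
    intro i j hij
    have h' : i + 1 = j := hij
    subst h'
    exact (hgc i).symm
  let G : Y ⟶ X := { f := g, comm' := hGcomm }
  have hGf : ∀ j, G.f j = g j := fun j => rfl
  have hGX : Nonempty (Homotopy (f ≫ G) (𝟙 X)) := by
    refine Nonempty.map Homotopy.equivSubZero.symm ?_
    refine nullHomotopy_of_vanishing n hX hXc _ k hk1 hk2 ?_ ?_
    · simp [HomologicalComplex.sub_f_apply, hGf, hg0]
    · simp [HomologicalComplex.sub_f_apply, hGf, hg1]
  have hGY : Nonempty (Homotopy (G ≫ f) (𝟙 Y)) := by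
    refine Nonempty.map Homotopy.equivSubZero.symm ?_
    refine nullHomotopy_of_vanishing n hY hYc _ k hk1 hk2 ?_ ?_
    · simp [HomologicalComplex.sub_f_apply, hGf, hg0]
    · simp [HomologicalComplex.sub_f_apply, hGf, hg1]
  obtain ⟨hGX⟩ := hGX
  obtain ⟨hGY⟩ := hGY
  refine ⟨(HomotopyCategory.quotient C (ComplexShape.up ℕ)).map G, ?_, ?_⟩
  · rw [← CategoryTheory.Functor.map_comp, HomotopyCategory.eq_of_homotopy _ _ hGX, CategoryTheory.Functor.map_id]
  · rw [← CategoryTheory.Functor.map_comp, HomotopyCategory.eq_of_homotopy _ _ hGY, CategoryTheory.Functor.map_id]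
end

section
/- Let C be an idempotent complete additive category and suppose given composable morphisms A → B → C → D denoted f, g, h. If g is a weak cokernel of f and h is both a split epimorphism and a cokernel of g, then f admits a cokernel in C. -/
open CategoryTheory CategoryTheory.Limits

universe v u

open NHomAlg in
/-- In an idempotent complete additive category, given `A ⟶ B ⟶ C ⟶ D` where `g` is a weak
cokernel of `f`, and `h` is a split epimorphism which is a cokernel of `g`, the morphism
`f` admits a cokernel. -/
theorem hasCokernel_of_weakCokernel {C : Type u} [Category.{v} C] [Preadditive C]
    (hC : IsIdempotentComplete C) {A B D E : C}
    (f : A ⟶ B) (g : B ⟶ D) (h : D ⟶ E)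
    (hg : IsWeakCokernel f g) (hsplit : IsSplitEpi h)
    (w : g ≫ h = 0) (hcoker : Nonempty (IsColimit (CokernelCofork.ofπ h w))) :
    HasCokernel f := by
  obtain ⟨hc⟩ := hcoker
  haveI := hsplit
  set s : E ⟶ D := CategoryTheory.section_ h with hs
  have hsh : s ≫ h = 𝟙 E := IsSplitEpi.id h
  have hidem : (𝟙 D - h ≫ s) ≫ (𝟙 D - h ≫ s) = 𝟙 D - h ≫ s := by
    simp only [Preadditive.sub_comp, Preadditive.comp_sub, Category.id_comp,
      Category.comp_id, Category.assoc]
    rw [show h ≫ s ≫ h ≫ s = h ≫ s by rw [reassoc_of% hsh]]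
    abel
  obtain ⟨Y, i, p, hip, hpi⟩ := hC.idempotents_split D (𝟙 D - h ≫ s) hidem
  have hfgp : f ≫ (g ≫ p) = 0 := by rw [reassoc_of% hg.1, zero_comp]
  have key : ∀ ⦃Z : C⦄ (t : Y ⟶ Z), g ≫ p ≫ t = 0 → t = 0 := by
    intro Z t ht
    have h0 : g ≫ (p ≫ t) = 0 := by rw [← Category.assoc, Category.assoc]; exact ht
    obtain ⟨q, hq⟩ := CokernelCofork.IsColimit.desc' hc (p ≫ t) h0
    have hq' : h ≫ q = p ≫ t := by simpa using hq
    have hih : i ≫ h = 0 := by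
      have hp : Epi p := by
        constructor
        intro W u v huv
        have := congrArg (fun x => i ≫ x) huv
        simpa [reassoc_of% hip] using this
      have : p ≫ i ≫ h = p ≫ 0 := by
        rw [comp_zero, ← Category.assoc, hpi]
        simp [Preadditive.sub_comp, Category.assoc, hsh]
      exact hp.left_cancellation _ _ this
    calc t = (i ≫ p) ≫ t := by rw [hip, Category.id_comp]
      _ = i ≫ h ≫ q := by rw [Category.assoc, hq']
      _ = 0 := by rw [← Category.assoc, hih, zero_comp]
  have fac : ∀ ⦃Z : C⦄ (u : B ⟶ Z) (hu : f ≫ u = 0),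
      (g ≫ p) ≫ i ≫ (hg.2 u hu).choose = u := by
    intro Z u hu
    have hv' : g ≫ (hg.2 u hu).choose = u := (hg.2 u hu).choose_spec
    rw [Category.assoc, ← Category.assoc p, hpi]
    simp only [Preadditive.sub_comp, Preadditive.comp_sub, Category.id_comp, Category.assoc]
    rw [hv', reassoc_of% w, zero_comp, sub_zero]
  apply HasColimit.mk ⟨_, CokernelCofork.IsColimit.ofπ (g ≫ p) hfgp
    (fun {Z} u hu => i ≫ (hg.2 u hu).choose) (fun {Z} u hu => fac u hu) ?_⟩
  intro Z u hu m hm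
  have h1 : g ≫ p ≫ (m - (i ≫ (hg.2 u hu).choose)) = 0 := by
    simp only [Preadditive.comp_sub]
    rw [← Category.assoc, hm, ← Category.assoc, fac u hu, sub_self]
  have h2 := key _ h1
  rw [sub_eq_zero] at h2
  exact h2
end

section
/- Let M be an idempotent complete additive category in which every morphism has an n-cokernel and an n-kernel, and let X be a complex concentrated in degrees 0 through n such that for all 0 ≤ k ≤ n-1 the morphism d^k is a weak cokernel of d^{k-1}. Then d^{n-1} admits a cokernel in M. -/
open CategoryTheory CategoryTheory.Limits

universe v u

section TowAux

open CategoryTheory CategoryTheory.Limits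

variable {M : Type u} [Category.{v} M] [Preadditive M]

/-- `f` admits a chain of `m` successive weak cokernels, the last one being
"Hom-epi" (left cancellable under precomposition). For `m = 0` this says `f` itself is
Hom-epi; `Tow 1 _ _ f` says `f` has a genuine cokernel. -/
private def Tow : ℕ → ∀ (A B : M), (A ⟶ B) → Prop
  | 0, _, B, f => ∀ ⦃Z : M⦄ (u u' : B ⟶ Z), f ≫ u = f ≫ u' → u = u'
  | m + 1, _, B, f => ∃ (D : M) (g : B ⟶ D), f ≫ g = 0 ∧
      (∀ ⦃Z : M⦄ (h : B ⟶ Z), f ≫ h = 0 → ∃ u : D ⟶ Z, g ≫ u = h) ∧ Tow m B D g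

private lemma tow_congr {A A' B : M} {f : A ⟶ B} {f' : A' ⟶ B} (m : ℕ)
    (hff : ∀ ⦃Z : M⦄ (k : B ⟶ Z), f ≫ k = 0 ↔ f' ≫ k = 0) :
    Tow m _ _ f → Tow m _ _ f' := by
  cases m with
  | zero =>
    intro h Z u u' huu
    apply h
    have h0 : f' ≫ (u - u') = 0 := by
      rw [Preadditive.comp_sub, huu, sub_self]
    have h1 : f ≫ (u - u') = 0 := (hff (u - u')).mpr h0
    rw [Preadditive.comp_sub, sub_eq_zero] at h1
    exact h1
  | succ m =>
    rintro ⟨D, g, h1, h2, h3⟩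
    exact ⟨D, g, (hff g).mp h1, fun Z h hh => h2 h ((hff h).mpr hh), h3⟩

/-- The key comparison recursion: given two weak-cokernel towers of the same length that
are linked at the bottom (one sits one step "deeper"), the deeper tower may be shortened
by one. -/
private lemma keyRec (hM : IsIdempotentComplete M) :
    ∀ (r : ℕ) {Sp Sc Tp Tc Tn : M} (σ : Sp ⟶ Sc) (τ : Tp ⟶ Tc) (τ' : Tc ⟶ Tn)
      (α : Sc ⟶ Tc) (β : Tc ⟶ Sc) (η : Tc ⟶ Tp) (θ : Tn ⟶ Tc)
      (_ : Tow (r + 2) _ _ σ) (_ : Tow (r + 2) _ _ τ') (_ : τ ≫ τ' = 0)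
      (_ : ∀ ⦃Z : M⦄ (h : Tc ⟶ Z), τ ≫ h = 0 → ∃ u : Tn ⟶ Z, τ' ≫ u = h)
      (_ : ∃ φ : Sp ⟶ Tp, σ ≫ α = φ ≫ τ) (_ : ∃ ψ : Tp ⟶ Sp, τ ≫ β = ψ ≫ σ)
      (_ : 𝟙 Tc - β ≫ α = τ' ≫ θ + η ≫ τ),
      Tow (r + 1) _ _ τ' := by
  intro r
  induction r with
  | zero =>
    intro Sp Sc Tp Tc Tn σ τ τ' α β η θ hS hT hττ' hwτ hφe hψe hJ
    obtain ⟨φ, hφ⟩ := hφe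
    obtain ⟨ψ, hψ⟩ := hψe
    obtain ⟨S1, ς1, hσς1, wσ, hS1⟩ := hS
    obtain ⟨S2, ς2, hς12, wς1, hS2⟩ := hS1
    obtain ⟨T1, ω1, hτω1, wτ', hT1⟩ := hT
    obtain ⟨T2, ω2, hω12, wω1, hT2⟩ := hT1
    have hS2' : ∀ ⦃Z : M⦄ (u u' : S2 ⟶ Z), ς2 ≫ u = ς2 ≫ u' → u = u' := hS2
    have hT2' : ∀ ⦃Z : M⦄ (u u' : T2 ⟶ Z), ω2 ≫ u = ω2 ≫ u' → u = u' := hT2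
    -- level 1 comparison maps
    obtain ⟨a1, ha1⟩ := wσ (α ≫ τ')
      (by rw [← Category.assoc, hφ, Category.assoc, hττ', comp_zero])
    obtain ⟨b1, hb1⟩ := hwτ (β ≫ ς1)
      (by rw [← Category.assoc, hψ, Category.assoc, hσς1, comp_zero])
    -- τ' ≫ θ ≫ τ' = τ' - β ≫ α ≫ τ'
    have hθτ : τ' ≫ θ ≫ τ' = τ' - β ≫ α ≫ τ' := by
      have h := congrArg (fun x => x ≫ τ') hJ
      simp only [Preadditive.sub_comp, Preadditive.add_comp, Category.id_comp,
        Category.assoc, hττ', comp_zero, add_zero, zero_comp] at h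
      exact h.symm
    have hb1a1 : τ' ≫ b1 ≫ a1 = β ≫ α ≫ τ' := by
      rw [← Category.assoc, hb1, Category.assoc, ha1]
    -- level 1 homotopy
    obtain ⟨h1, hh1⟩ := wτ' ((𝟙 Tn - b1 ≫ a1) - θ ≫ τ')
      (by
        rw [Preadditive.comp_sub, Preadditive.comp_sub, Category.comp_id,
          ← Category.assoc τ' b1 a1]
        rw [← Category.assoc τ' θ τ'] at hθτ ⊢
        rw [← Category.assoc] at hb1a1
        rw [hb1a1, hθτ]
        abel)
    -- level 2 comparison maps
    obtain ⟨a2, ha2⟩ := wς1 (a1 ≫ ω1)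
      (by rw [← Category.assoc, ha1, Category.assoc, hτω1, comp_zero])
    obtain ⟨b2, hb2⟩ := wτ' (b1 ≫ ς2)
      (by rw [← Category.assoc, hb1, Category.assoc, hς12, comp_zero])
    have ha2ω2 : a2 ≫ ω2 = 0 := by
      apply hS2'
      rw [← Category.assoc, ha2, Category.assoc, hω12, comp_zero, comp_zero]
    have hb2a2 : ω1 ≫ b2 ≫ a2 = (𝟙 Tn - (𝟙 Tn - b1 ≫ a1)) ≫ ω1 := by
      rw [← Category.assoc, hb2, Category.assoc, ha2, ← Category.assoc]
      simp only [Preadditive.sub_comp, Category.id_comp, sub_sub_cancel]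
    -- level 2 homotopy
    obtain ⟨h2, hh2⟩ := wω1 ((𝟙 T1 - b2 ≫ a2) - h1 ≫ ω1)
      (by
        have e1 : ω1 ≫ h1 ≫ ω1 = ((𝟙 Tn - b1 ≫ a1) - θ ≫ τ') ≫ ω1 := by
          rw [← Category.assoc, hh1]
        rw [Preadditive.comp_sub, Preadditive.comp_sub, Category.comp_id, hb2a2, e1]
        simp only [Preadditive.sub_comp, Category.id_comp, Category.assoc, hτω1,
          comp_zero, sub_zero]
        abel)
    -- ω2 is a split epimorphism with section h2
    have hsec : h2 ≫ ω2 = 𝟙 T2 := by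
      apply hT2'
      rw [← Category.assoc, hh2]
      simp only [Preadditive.sub_comp, Category.id_comp, Category.assoc, hω12,
        Category.comp_id, comp_zero, sub_zero, ha2ω2]
    -- split the idempotent 𝟙 - ω2 ≫ h2
    have hidem : (𝟙 T1 - ω2 ≫ h2) ≫ (𝟙 T1 - ω2 ≫ h2) = 𝟙 T1 - ω2 ≫ h2 := by
      simp only [Preadditive.sub_comp, Preadditive.comp_sub, Category.id_comp,
        Category.comp_id, Category.assoc]
      rw [← Category.assoc h2 ω2 h2, hsec, Category.id_comp]
      abel
    obtain ⟨N, ι, ρ, hιρ, hρι⟩ := hM.idempotents_split T1 (𝟙 T1 - ω2 ≫ h2) hidem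
    have hιe : ι ≫ (𝟙 T1 - ω2 ≫ h2) = ι := by
      rw [← hρι, ← Category.assoc, hιρ, Category.id_comp]
    have h0 : ι ≫ ω2 ≫ h2 = 0 := by
      rw [Preadditive.comp_sub, Category.comp_id, sub_eq_self] at hιe
      exact hιe
    have hιω2 : ι ≫ ω2 = 0 := by
      calc ι ≫ ω2 = (ι ≫ ω2 ≫ h2) ≫ ω2 := by
            rw [Category.assoc, Category.assoc, hsec, Category.comp_id]
        _ = 0 := by rw [h0, zero_comp]
    -- assemble the shortened tower:  τ' , ω1 ≫ ρ  with  ω1 ≫ ρ Hom-epi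
    refine ⟨N, ω1 ≫ ρ, ?_, ?_, ?_⟩
    · rw [← Category.assoc, hτω1, zero_comp]
    · intro Z h hτh
      obtain ⟨v, hv⟩ := wτ' h hτh
      refine ⟨ι ≫ v, ?_⟩
      have : ω1 ≫ (ρ ≫ ι) ≫ v = ω1 ≫ v := by
        rw [hρι]
        simp only [Preadditive.sub_comp, Preadditive.comp_sub, Category.id_comp,
          Category.assoc]
        rw [← Category.assoc ω1 ω2 (h2 ≫ v), hω12, zero_comp, sub_zero]
      calc (ω1 ≫ ρ) ≫ ι ≫ v = ω1 ≫ (ρ ≫ ι) ≫ v := by simp only [Category.assoc]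
        _ = ω1 ≫ v := this
        _ = h := hv
    · intro Z u u' huu
      have h0 : ω1 ≫ (ρ ≫ u - ρ ≫ u') = 0 := by
        simp only [Preadditive.comp_sub]
        rw [← Category.assoc, ← Category.assoc, huu, sub_self]
      obtain ⟨v, hv⟩ := wω1 (ρ ≫ u - ρ ≫ u') h0
      have hz : u - u' = 0 := by
        calc u - u' = (ι ≫ ρ) ≫ u - (ι ≫ ρ) ≫ u' := by rw [hιρ]; simp
          _ = ι ≫ (ρ ≫ u - ρ ≫ u') := by
              simp only [Preadditive.comp_sub, Category.assoc]
          _ = ι ≫ ω2 ≫ v := by rw [hv]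
          _ = 0 := by rw [← Category.assoc, hιω2, zero_comp]
      exact sub_eq_zero.mp hz
  | succ r ih =>
    intro Sp Sc Tp Tc Tn σ τ τ' α β η θ hS hT hττ' hwτ hφe hψe hJ
    obtain ⟨φ, hφ⟩ := hφe
    obtain ⟨ψ, hψ⟩ := hψe
    obtain ⟨S', ς, hσς, wσ, hS'⟩ := hS
    obtain ⟨T', ω, hτ'ω, wτ', hT'⟩ := hT
    obtain ⟨a, ha⟩ := wσ (α ≫ τ')
      (by rw [← Category.assoc, hφ, Category.assoc, hττ', comp_zero])
    obtain ⟨b, hb⟩ := hwτ (β ≫ ς)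
      (by rw [← Category.assoc, hψ, Category.assoc, hσς, comp_zero])
    have hθτ : τ' ≫ θ ≫ τ' = τ' - β ≫ α ≫ τ' := by
      have h := congrArg (fun x => x ≫ τ') hJ
      simp only [Preadditive.sub_comp, Preadditive.add_comp, Category.id_comp,
        Category.assoc, hττ', comp_zero, add_zero, zero_comp] at h
      exact h.symm
    have hba : τ' ≫ b ≫ a = β ≫ α ≫ τ' := by
      rw [← Category.assoc, hb, Category.assoc, ha]
    obtain ⟨h', hh'⟩ := wτ' ((𝟙 Tn - b ≫ a) - θ ≫ τ')
      (by
        rw [Preadditive.comp_sub, Preadditive.comp_sub, Category.comp_id,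
          ← Category.assoc τ' b a]
        rw [← Category.assoc τ' θ τ'] at hθτ ⊢
        rw [← Category.assoc] at hba
        rw [hba, hθτ]
        abel)
    have hJ' : 𝟙 Tn - b ≫ a = ω ≫ h' + θ ≫ τ' := by rw [hh']; abel
    have := ih ς τ' ω a b θ h' hS' hT' hτ'ω wτ' ⟨α, ha⟩ ⟨β, hb⟩ hJ'
    exact ⟨T', ω, hτ'ω, wτ', this⟩

end TowAux

section TowAux2

open CategoryTheory CategoryTheory.Limits NHomAlg

variable {M : Type u} [Category.{v} M] [Preadditive M]

private lemma tow_of_seq {n : ℕ} {K : CochainComplex M ℕ} (hseq : IsNCokernelSeq n K) :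
    ∀ (i j : ℕ), i + j = n → 1 ≤ j → Tow i _ _ (K.d j (j+1)) := by
  intro i
  induction i with
  | zero =>
    intro j hij _
    have hjn : j = n := by omega
    subst hjn
    exact hseq.2
  | succ i ih =>
    intro j hij hj
    refine ⟨K.X (j+2), K.d (j+1) (j+2), K.d_comp_d _ _ _, ?_, ?_⟩
    · intro Z h hh
      have := hseq.1 (j+1) (by omega) (by omega) (h := h) (by simpa using hh)
      simpa using this
    · exact ih (j+1) (by omega) (by omega)

private lemma tow_of_hasNCokernel {n : ℕ} (hn : 1 ≤ n) {A B : M} {f : A ⟶ B}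
    (h : HasNCokernel n f) : Tow n _ _ f := by
  obtain ⟨K, eA, eB, hcomm, hseq⟩ := h
  obtain ⟨m, rfl⟩ : ∃ m, n = m + 1 := ⟨n - 1, by omega⟩
  refine ⟨K.X 2, eB.hom ≫ K.d 1 2, ?_, ?_, ?_⟩
  · rw [← Category.assoc, ← hcomm, Category.assoc, K.d_comp_d, comp_zero]
  · intro Z h hh
    have h1 : eA.hom ≫ K.d 0 1 ≫ eB.inv ≫ h = 0 := by
      rw [← Category.assoc, hcomm, Category.assoc, eB.hom_inv_id_assoc, hh]
    have h0 : K.d 0 1 ≫ eB.inv ≫ h = 0 :=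
      (cancel_epi eA.hom).mp (h1.trans (comp_zero (f := eA.hom)).symm)
    obtain ⟨p, hp⟩ := hseq.1 1 le_rfl (by omega) (eB.inv ≫ h) (by simpa using h0)
    exact ⟨p, by rw [Category.assoc, hp, eB.hom_inv_id_assoc]⟩
  · refine tow_congr m ?_ (tow_of_seq hseq m 1 (by omega) le_rfl)
    intro Z k
    constructor
    · intro hk
      rw [Category.assoc, hk, comp_zero]
    · intro hk
      exact (cancel_epi eB.hom).mp
        (by rw [comp_zero, ← Category.assoc]; exact hk)

private lemma dev (hM : IsIdempotentComplete M) {A B D : M} (f : A ⟶ B) (g : B ⟶ D)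
    (m : ℕ) (hm : 2 ≤ m) (hfg : f ≫ g = 0)
    (hw : ∀ ⦃Z : M⦄ (h : B ⟶ Z), f ≫ h = 0 → ∃ u : D ⟶ Z, g ≫ u = h)
    (hf : Tow m _ _ f) (hg : Tow m _ _ g) : Tow (m - 1) _ _ g := by
  obtain ⟨r, rfl⟩ : ∃ r, m = r + 2 := ⟨m - 2, by omega⟩
  have h := keyRec hM r f f g (𝟙 B) (𝟙 B) 0 0 hf hg hfg hw
    ⟨𝟙 A, by simp⟩ ⟨𝟙 A, by simp⟩ (by simp)
  simpa using h

end TowAux2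

open NHomAlg in
/-- Let `M` be an idempotent complete additive category in which every morphism has an
`n`-cokernel and an `n`-kernel, and let `X` be a complex concentrated in degrees
`0, …, n` in which `d^k` is a weak cokernel of `d^{k-1}` for `1 ≤ k ≤ n-1` (the condition
at `k = 0` being vacuous). Then `d^{n-1}` admits a cokernel. -/
theorem weak_cokernel_extends_to_cokernel {M : Type u} [Category.{v} M] [Preadditive M]
    (n : ℕ) (hn : 1 ≤ n) (hM : IsIdempotentComplete M)
    (hco : ∀ ⦃A B : M⦄ (f : A ⟶ B), HasNCokernel n f)
    (hker : ∀ ⦃A B : M⦄ (f : A ⟶ B), HasNKernel n f)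
    (X : CochainComplex M ℕ) (hX : ConcentratedBelow n X)
    (hwk : ∀ k, 1 ≤ k → k ≤ n - 1 → IsWeakCokernel (X.d (k-1) k) (X.d k (k+1))) :
    HasCokernel (X.d (n-1) n) := by
  have main : ∀ i, i ≤ n - 1 → ∀ j, i ≤ j → j ≤ n - 1 → Tow (n - i) _ _ (X.d j (j+1)) := by
    intro i
    induction i with
    | zero =>
      intro _ j _ _
      have := tow_of_hasNCokernel hn (hco (X.d j (j+1)))
      simpa using this
    | succ i ih =>
      intro hi j hij hj
      have hf : Tow (n - i) _ _ (X.d (j-1) j) := by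
        have := ih (by omega) (j-1) (by omega) (by omega)
        have hj1 : j - 1 + 1 = j := by omega
        rwa [hj1] at this
      have hg : Tow (n - i) _ _ (X.d j (j+1)) := ih (by omega) j (by omega) hj
      have hwc := hwk j (by omega) hj
      have hdd : X.d (j-1) j ≫ X.d j (j+1) = 0 := X.d_comp_d _ _ _
      have hres := dev hM (X.d (j-1) j) (X.d j (j+1)) (n - i) (by omega) hdd hwc.2 hf hg
      have harith : n - i - 1 = n - (i+1) := by omega
      rwa [harith] at hres
  have h1 : Tow 1 _ _ (X.d (n-1) n) := by
    have := main (n-1) le_rfl (n-1) le_rfl le_rfl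
    have e1 : n - (n-1) = 1 := by omega
    have e2 : n - 1 + 1 = n := by omega
    rwa [e1, e2] at this
  obtain ⟨Q, c, hc0, hcw, hce⟩ := h1
  have hce' : ∀ ⦃Z : M⦄ (u u' : Q ⟶ Z), c ≫ u = c ≫ u' → u = u' := hce
  exact HasColimit.mk ⟨CokernelCofork.ofπ c hc0,
    CokernelCofork.IsColimit.ofπ c hc0
      (fun {Z} k hk => (hcw k hk).choose)
      (fun {Z} k hk => (hcw k hk).choose_spec)
      (fun {Z} k hk m hm => hce' m (hcw k hk).choose
        (by rw [hm, (hcw k hk).choose_spec]))⟩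
end

section
/- Let m and n be distinct positive integers and C an additive category. If C is both m-abelian and n-abelian, then C is semisimple. -/
open CategoryTheory CategoryTheory.Limits

universe v u

/-!
Suppose `m < n`. A monomorphism `f` has an `m`-cokernel; padding it with zeros gives an
`n`-cokernel of `f`, which is `n`-exact by (A2) for `n`. In the resulting `n`-kernel sequence the
differential out of degree `m + 1` is zero, in particular von Neumann regular, and regularity
descends along an `n`-kernel sequence down to `d⁰ = f`, which therefore splits. So every
monomorphism splits.

Now take any `f : A ⟶ B` and an `n`-kernel `d⁰, …, dⁿ⁻¹` of it. Since kernels split and idempotents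
split, a kernel `k` of `dʲ` has a complement `ι`, and `ι ≫ dʲ` is a kernel of `dʲ⁺¹`; starting
from `0 ⟶ X⁰` this produces a kernel of `f`. That kernel splits off `A`, and the restriction of
`f` to its complement is a split monomorphism.
-/

namespace NHomAlg

open ZeroObject

variable {C : Type u} [Category.{v} C] [Preadditive C]

lemma IsNKernelSeq.isSplitMono_d_zero {n : ℕ} {L : CochainComplex C ℕ}
    (hL : IsNKernelSeq n L) (j : ℕ) (hj : j ≤ n) (h : L.X (j+1) ⟶ L.X j)
    (hh : L.d j (j+1) ≫ h ≫ L.d j (j+1) = L.d j (j+1)) : IsSplitMono (L.d 0 1) := by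
  induction j with
  | zero => exact IsSplitMono.mk' ⟨h, hL.2 _ _ (by simpa using hh)⟩
  | succ j ih =>
    -- Regularity descends: `𝟙 - d^{j+1} ≫ h` factors as `p ≫ d^j`, and `d^j ≫ p ≫ d^j = d^j`.
    have hker : (𝟙 _ - L.d (j+1) (j+2) ≫ h) ≫ L.d (j+1) (j+2) = 0 := by
      simp [Preadditive.sub_comp, hh]
    obtain ⟨p, hp⟩ := hL.1 (j+1) (by omega) hj _ hker
    refine ih (by omega) p ?_
    change p ≫ L.d j (j+1) = _ at hp
    simp [hp, Preadditive.comp_sub]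

section PadZero

variable [HasZeroObject C] (m : ℕ) (K : CochainComplex C ℕ)

noncomputable def padZeroX (k : ℕ) : C := if k ≤ m + 1 then K.X k else 0

noncomputable def padZeroXIso {k : ℕ} (hk : k ≤ m + 1) : padZeroX m K k ≅ K.X k :=
  eqToIso (if_pos hk)

noncomputable def padZeroD (k : ℕ) : padZeroX m K k ⟶ padZeroX m K (k+1) :=
  if hk : k + 1 ≤ m + 1 then
    (padZeroXIso m K (by omega)).hom ≫ K.d k (k+1) ≫ (padZeroXIso m K hk).inv
  else 0

lemma padZeroD_comp_padZeroD (k : ℕ) : padZeroD m K k ≫ padZeroD m K (k+1) = 0 := by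
  by_cases hk : k + 2 ≤ m + 1
  · rw [padZeroD, padZeroD, dif_pos (by omega), dif_pos hk]
    simp
  · rw [show padZeroD m K (k+1) = 0 from dif_neg hk, comp_zero]

/-- The complex `K.X 0 → ⋯ → K.X (m+1) → 0 → 0 → ⋯`. -/
noncomputable abbrev padZero : CochainComplex C ℕ :=
  CochainComplex.of (padZeroX m K) (padZeroD m K) (padZeroD_comp_padZeroD m K)

lemma padZero_d {k : ℕ} (hk : k + 1 ≤ m + 1) :
    (padZero m K).d k (k+1) =
      (padZeroXIso m K (by omega)).hom ≫ K.d k (k+1) ≫ (padZeroXIso m K hk).inv :=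
  (CochainComplex.of_d _ _ k).trans (dif_pos hk)

lemma isZero_padZero_X {k : ℕ} (hk : m + 1 < k) : IsZero ((padZero m K).X k) := by
  change IsZero (if k ≤ m + 1 then K.X k else 0)
  rw [if_neg (by omega)]
  exact isZero_zero C

variable {m K}

lemma isNCokernelSeq_padZero {n : ℕ} (hK : IsNCokernelSeq m K) (hmn : m < n) :
    IsNCokernelSeq n (padZero m K) := by
  refine ⟨fun k hk hkn Z h hh => ?_,
    fun Z h h' _ => (isZero_padZero_X m K (by omega)).eq_of_src h h'⟩
  obtain ⟨j, rfl⟩ : ∃ j, k = j + 1 := ⟨k - 1, by omega⟩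
  change (padZero m K).d j (j+1) ≫ h = 0 at hh
  by_cases hjm : j + 1 ≤ m + 1
  swap
  · exact ⟨0, (isZero_padZero_X m K (by omega)).eq_of_src _ _⟩
  rw [padZero_d m K hjm] at hh
  have hh' : K.d j (j+1) ≫ (padZeroXIso m K hjm).inv ≫ h = 0 := by
    simpa using (padZeroXIso m K (by omega)).inv ≫= hh
  rcases (by omega : j + 2 ≤ m + 1 ∨ j = m) with hj | rfl
  · obtain ⟨p, hp⟩ := hK.1 (j+1) (by omega) (by omega) _ hh'
    refine ⟨(padZeroXIso m K hj).hom ≫ p, ?_⟩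
    rw [padZero_d m K hj]
    simp [hp]
  · -- `d^m` is an epimorphism, being the end of the `m`-cokernel.
    have h0 : (padZeroXIso j K hjm).inv ≫ h = 0 := hK.2 _ 0 (by simpa using hh')
    refine ⟨0, ?_⟩
    rw [comp_zero, eq_comm, ← cancel_epi (padZeroXIso j K hjm).inv, h0, comp_zero]

lemma splitMonoCategory_of_lt {m n : ℕ} (hmn : m < n)
    (hcok : ∀ ⦃A B : C⦄ (f : A ⟶ B), HasNCokernel m f)
    (hexact : ∀ K : CochainComplex C ℕ, Mono (K.d 0 1) → IsNCokernelSeq n K → IsNExactSeq n K) :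
    SplitMonoCategory C where
  isSplitMono_of_mono {A B} f _ := by
    obtain ⟨K, eA, eB, hcomm, hK⟩ := hcok f
    let a := padZeroXIso m K (k := 0) (by omega)
    let b := padZeroXIso m K (k := 1) (by omega)
    have hd : (padZero m K).d 0 1 = a.hom ≫ eA.inv ≫ f ≫ eB.hom ≫ b.inv := by
      rw [padZero_d m K (by omega), ← reassoc_of% hcomm, Iso.inv_hom_id_assoc]
    have : Mono ((padZero m K).d 0 1) := by
      rw [hd]
      infer_instance
    have hsplit := (hexact _ this (isNCokernelSeq_padZero hK hmn)).1.isSplitMono_d_zero (m+1)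
      (by omega) 0 (by simpa using (isZero_padZero_X m K (by omega)).eq_of_tgt 0 _)
    rw [hd] at hsplit
    have hr := eA.hom ≫= a.inv ≫= IsSplitMono.id (a.hom ≫ eA.inv ≫ f ≫ eB.hom ≫ b.inv) =≫
      a.hom ≫ eA.inv
    exact IsSplitMono.mk' ⟨eB.hom ≫ b.inv ≫ retraction _ ≫ a.hom ≫ eA.inv, by
      simpa only [Category.assoc, Category.id_comp, Iso.hom_inv_id_assoc, Iso.inv_hom_id_assoc,
        Iso.hom_inv_id] using hr⟩

end PadZero

lemma exists_complement_of_isSplitMono (hC : IsIdempotentComplete C) {K X : C} (k : K ⟶ X)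
    [IsSplitMono k] :
    ∃ (Q : C) (ι : Q ⟶ X) (q : X ⟶ Q), ι ≫ q = 𝟙 Q ∧ k ≫ q = 0 ∧
      ∀ ⦃A : C⦄ (w : X ⟶ A), k ≫ w = 0 → q ≫ ι ≫ w = w := by
  have hidem : (𝟙 X - retraction k ≫ k) ≫ (𝟙 X - retraction k ≫ k) =
      𝟙 X - retraction k ≫ k := by
    simp [Preadditive.comp_sub, Preadditive.sub_comp]
  obtain ⟨Q, ι, q, hιq, hqι⟩ := hC.idempotents_split X _ hidem
  have : IsSplitMono ι := IsSplitMono.mk' ⟨q, hιq⟩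
  refine ⟨Q, ι, q, hιq, ?_, fun A w hw => ?_⟩
  · rw [← cancel_mono ι, Category.assoc, hqι]
    simp [Preadditive.comp_sub]
  · rw [← Category.assoc, hqι]
    simp [Preadditive.sub_comp, hw]

lemma IsWeakKernel.mono_comp {K X Q A : C} {k : K ⟶ X} {w : X ⟶ A} (hk : IsWeakKernel k w)
    {ι : Q ⟶ X} {q : X ⟶ Q} (hιq : ι ≫ q = 𝟙 Q) (hkq : k ≫ q = 0) : Mono (ι ≫ w) := by
  refine Preadditive.mono_of_cancel_zero _ fun {Z} g hg => ?_
  obtain ⟨s, hs⟩ := hk.2 (g ≫ ι) (by simpa using hg)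
  calc g = g ≫ ι ≫ q := by rw [hιq, Category.comp_id]
    _ = 0 := by rw [← Category.assoc, ← hs, Category.assoc, hkq, comp_zero]

lemma IsWeakKernel.exists_mono_isWeakKernel (hC : IsIdempotentComplete C) {K X A B : C}
    {k : K ⟶ X} {w : X ⟶ A} {f : A ⟶ B} (hw : IsWeakKernel w f) (hk : IsWeakKernel k w)
    [IsSplitMono k] : ∃ (Q : C) (i : Q ⟶ A), Mono i ∧ IsWeakKernel i f := by
  obtain ⟨Q, ι, q, hιq, hkq, hqι⟩ := exists_complement_of_isSplitMono hC k
  refine ⟨Q, ι ≫ w, hk.mono_comp hιq hkq, by simp [hw.1], fun Z h hh => ?_⟩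
  obtain ⟨p, rfl⟩ := hw.2 h hh
  exact ⟨p ≫ q, by rw [Category.assoc, hqι w hk.1]⟩

lemma IsWeakKernel.exists_isSplitEpi_comp_mono (hC : IsIdempotentComplete C) {K A B : C}
    {k : K ⟶ A} {f : A ⟶ B} (hk : IsWeakKernel k f) [IsSplitMono k] :
    ∃ (I : C) (p : A ⟶ I) (i : I ⟶ B), IsSplitEpi p ∧ Mono i ∧ p ≫ i = f := by
  obtain ⟨Q, ι, q, hιq, hkq, hqι⟩ := exists_complement_of_isSplitMono hC k
  exact ⟨Q, q, ι ≫ f, IsSplitEpi.mk' ⟨ι, hιq⟩, hk.mono_comp hιq hkq, hqι f hk.1⟩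

lemma IsNKernelSeq.isWeakKernel {n : ℕ} {K : CochainComplex C ℕ} (hK : IsNKernelSeq n K)
    {j : ℕ} (hj : j < n) : IsWeakKernel (K.d j (j+1)) (K.d (j+1) (j+2)) :=
  ⟨K.d_comp_d _ _ _, fun _ h hh => hK.1 (j+1) (by omega) hj h hh⟩

lemma HasNKernel.exists_mono_isWeakKernel [HasZeroObject C] [SplitMonoCategory C]
    (hC : IsIdempotentComplete C) {n : ℕ} {A B : C} {f : A ⟶ B} (hf : HasNKernel n f) :
    ∃ (Q : C) (i : Q ⟶ A), Mono i ∧ IsWeakKernel i f := by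
  obtain ⟨K, eA, eB, hcomm, hK⟩ := hf
  have hker : ∀ j ≤ n, ∃ (Q : C) (i : Q ⟶ K.X j), Mono i ∧ IsWeakKernel i (K.d j (j+1)) := by
    intro j
    induction j with
    | zero =>
      refine fun _ => ⟨0, 0, mono_of_source_iso_zero _ (Iso.refl _), zero_comp,
        fun Z h hh => ⟨0, ?_⟩⟩
      rw [zero_comp]
      exact hK.2 0 h (by rw [zero_comp, hh])
    | succ j ih =>
      intro hj
      obtain ⟨Q, i, _, hi⟩ := ih (by omega)
      have := SplitMonoCategory.isSplitMono_of_mono i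
      exact (hK.isWeakKernel hj).exists_mono_isWeakKernel hC hi
  obtain ⟨Q, i, _, hi⟩ := hker n le_rfl
  have hf : f = eA.hom ≫ K.d n (n+1) ≫ eB.inv := by
    rw [← Category.assoc, hcomm, Category.assoc, Iso.hom_inv_id, Category.comp_id]
  subst hf
  refine ⟨Q, i ≫ eA.inv, inferInstance, by simp [reassoc_of% hi.1], fun Z h hh => ?_⟩
  obtain ⟨p, hp⟩ := hi.2 (h ≫ eA.hom) (by simpa using hh =≫ eB.hom)
  exact ⟨p, by rw [← Category.assoc, hp, Category.assoc, Iso.hom_inv_id, Category.comp_id]⟩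

end NHomAlg

open NHomAlg in
theorem semisimple_of_mAbelian_nAbelian_general (C : Type u) [Category.{v} C] [Preadditive C]
    [HasZeroObject C] (m n : ℕ) (hmn : m ≠ n) (h1 : IsNAbelian m C) (h2 : IsNAbelian n C) :
    Semisimple C := by
  have : SplitMonoCategory C := by
    rcases hmn.lt_or_gt with h | h
    · exact splitMonoCategory_of_lt h (fun _ _ f => (h1.2.1 f).1) h2.2.2.1
    · exact splitMonoCategory_of_lt h (fun _ _ f => (h2.2.1 f).1) h1.2.2.1
  intro A B f
  obtain ⟨Q, k, _, hk⟩ := (h2.2.1 f).2.exists_mono_isWeakKernel h2.1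
  have := SplitMonoCategory.isSplitMono_of_mono k
  obtain ⟨I, p, i, hp, _, rfl⟩ := hk.exists_isSplitEpi_comp_mono h2.1
  exact ⟨I, p, i, hp, SplitMonoCategory.isSplitMono_of_mono i, rfl⟩

open NHomAlg in
/-- If `m ≠ n` are positive integers and `C` is both `m`-abelian and `n`-abelian, then `C`
is semisimple. -/
theorem semisimple_of_mAbelian_nAbelian (C : Type u) [Category.{v} C] [Preadditive C]
    [HasZeroObject C] [HasBinaryBiproducts C] (m n : ℕ) (hm : 1 ≤ m) (hn : 1 ≤ n)
    (hmn : m ≠ n) (h1 : IsNAbelian m C) (h2 : IsNAbelian n C) : Semisimple C :=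
  semisimple_of_mAbelian_nAbelian_general C m n hmn h1 h2
end
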